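/- Let {S_j}_{j=1}^N be an IFS of contractive similitudes on ℝ^d with augmented tree (X, 𝓔). If (X, 𝓔) is of bounded degree, then for every c > 0 there exists ℓ > 0 such that for every n ≥ 0 and every ball B ⊆ ℝ^d of radius c rⁿ, the number of words x ∈ 𝓙_n with K_x ∩ B ≠ ∅ is at most ℓ. -/

import Mathlib

open Metric Filter

namespace HypIFS

/-- Euclidean space `ℝ^d`. -/
abbrev Euc (d : ℕ) := EuclideanSpace ℝ (Fin d)

/-- The distance `dist(A, B)` between two subsets of a metric space. -/
noncomputable def setDist {E : Type*} [PseudoMetricSpace E] (A B : Set E) : ℝ :=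
  sInf (Set.image2 dist A B)

variable {d N : ℕ}

/-- For a word `x = i₁⋯i_k`, the composition `S_x = S_{i₁} ∘ ⋯ ∘ S_{i_k}`. -/
def sWord (S : Fin N → Euc d → Euc d) : List (Fin N) → Euc d → Euc d :=
  fun w => w.foldr (fun i f => S i ∘ f) id

/-- For a word `x = i₁⋯i_k`, the product `r_x = r_{i₁} ⋯ r_{i_k}` of contraction ratios. -/
def rWord (ρ : Fin N → ℝ) (w : List (Fin N)) : ℝ := (w.map ρ).prod

/-- The coding level `𝓙_n = {i₁⋯i_k : r_{i₁⋯i_k} ≤ rⁿ < r_{i₁⋯i_{k−1}}}`,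
with `𝓙_0` consisting of the empty word. -/
def Jlevel (ρ : Fin N → ℝ) (r : ℝ) (n : ℕ) : Set (List (Fin N)) :=
  if n = 0 then {([] : List (Fin N))}
  else {w | rWord ρ w ≤ r ^ n ∧ r ^ n < rWord ρ w.dropLast}

/-- The vertical (parent–child) edge relation: `x ∈ 𝓙_n` is the initial segment
of `y ∈ 𝓙_{n+1}`. -/
def EV (ρ : Fin N → ℝ) (r : ℝ) (x y : List (Fin N)) : Prop :=
  ∃ n : ℕ, x ∈ Jlevel ρ r n ∧ y ∈ Jlevel ρ r (n + 1) ∧ x <+: y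

/-- The horizontal edge relation: `x ≠ y` in the same level `𝓙_n` with
`dist(K_x, K_y) ≤ κ rⁿ`. -/
def EH (S : Fin N → Euc d → Euc d) (ρ : Fin N → ℝ) (r κ : ℝ) (K : Set (Euc d))
    (x y : List (Fin N)) : Prop :=
  ∃ n : ℕ, x ∈ Jlevel ρ r n ∧ y ∈ Jlevel ρ r n ∧ x ≠ y ∧
    setDist (sWord S x '' K) (sWord S y '' K) ≤ κ * r ^ n

/-- The augmented tree `(X, 𝓔)`, `𝓔 = 𝓔_v ∪ 𝓔_h`, as a graph on the word space
(words belonging to no level `𝓙_n` are isolated vertices). -/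
def augIFS (S : Fin N → Euc d → Euc d) (ρ : Fin N → ℝ) (r κ : ℝ) (K : Set (Euc d)) :
    SimpleGraph (List (Fin N)) where
  Adj x y := (EV ρ r x y ∨ EV ρ r y x ∨ EH S ρ r κ K x y ∨ EH S ρ r κ K y x) ∧ x ≠ y
  symm := ⟨by
    rintro x y ⟨h1 | h2 | h3 | h4, hne⟩
    · exact ⟨Or.inr (Or.inl h1), hne.symm⟩
    · exact ⟨Or.inl h2, hne.symm⟩
    · exact ⟨Or.inr (Or.inr (Or.inr h3)), hne.symm⟩
    · exact ⟨Or.inr (Or.inr (Or.inl h4)), hne.symm⟩⟩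
  loopless := ⟨fun x h => h.2 rfl⟩

/-- A graph is of bounded degree if `sup_x deg(x) < ∞`. -/
def BddDeg {V : Type*} (G : SimpleGraph V) : Prop :=
  ∃ M : ℕ, ∀ x : V, {y | G.Adj x y}.Finite ∧ {y | G.Adj x y}.ncard ≤ M

/-!
Choose `m` with `2 c rᵐ < κ`. A cell `K_x`, `x ∈ 𝓙_n`, meeting a ball `B` of radius `c rⁿ`
lies in the cell `K_p` of its ancestor `p ∈ 𝓙_{n-m}`, which therefore meets `B` too. Two such
ancestors contain points at distance at most `2 c rⁿ ≤ κ r^{n-m}`, so they are joined by a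
horizontal edge: they form a clique, hence there are at most `M + 1` of them when all degrees are
at most `M`. The children of a vertex are among its neighbours, so each ancestor has at most `Mᵐ`
descendants in `𝓙_n`, and `B` meets at most `(M + 1) Mᵐ` cells of level `n`.
-/

end HypIFS

theorem Set.encard_biUnion_le_encard_mul {ι α : Type*} {t : Set ι} {s : ι → Set α} {c : ℕ∞}
    (h : ∀ i ∈ t, (s i).encard ≤ c) : (⋃ i ∈ t, s i).encard ≤ t.encard * c := by
  rcases t.finite_or_infinite with ht | ht
  · obtain ⟨t, rfl⟩ := ht.exists_finset_coe
    calc (⋃ i ∈ (t : Set ι), s i).encard = (⋃ i ∈ t, s i).encard := by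
          simp only [Finset.mem_coe]
      _ ≤ ∑ i ∈ t, (s i).encard := t.set_encard_biUnion_le s
      _ ≤ t.card • c := t.sum_le_card_nsmul _ c h
      _ = (t : Set ι).encard * c := by rw [Set.encard_coe_eq_coe_finsetCard, nsmul_eq_mul]
  · rcases eq_or_ne c 0 with rfl | hc
    · have hempty : ∀ i ∈ t, s i = ∅ := fun i hi =>
        Set.encard_eq_zero.1 (nonpos_iff_eq_zero.1 (h i hi))
      simp +contextual [hempty]
    · rw [ht.encard_eq, ENat.top_mul hc]
      exact le_top

theorem SimpleGraph.IsClique.encard_le_succ {V : Type*} {G : SimpleGraph V} {s : Set V}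
    {M : ℕ∞} (hs : G.IsClique s) (hM : ∀ v, (G.neighborSet v).encard ≤ M) :
    s.encard ≤ M + 1 := by
  rcases s.eq_empty_or_nonempty with rfl | ⟨a, ha⟩
  · simp
  have hsub : s ⊆ G.neighborSet a ∪ {a} := fun b hb => by
    rcases eq_or_ne b a with rfl | hne
    · exact Or.inr rfl
    · exact Or.inl (hs ha hb hne.symm)
  calc s.encard ≤ (G.neighborSet a ∪ {a}).encard := Set.encard_le_encard hsub
    _ ≤ (G.neighborSet a).encard + 1 := by
      simpa using Set.encard_union_le (G.neighborSet a) {a}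
    _ ≤ M + 1 := by gcongr; exact hM a

namespace HypIFS

theorem bddDeg_iff {V : Type*} {G : SimpleGraph V} :
    BddDeg G ↔ ∃ M : ℕ, ∀ v, (G.neighborSet v).encard ≤ M := by
  simp only [BddDeg, Set.encard_le_coe_iff_finite_ncard_le]
  rfl

theorem setDist_le_dist {E : Type*} [PseudoMetricSpace E] {A B : Set E} {a b : E}
    (ha : a ∈ A) (hb : b ∈ B) : setDist A B ≤ dist a b :=
  csInf_le ⟨0, by rintro _ ⟨_, _, _, _, rfl⟩; exact dist_nonneg⟩ (Set.mem_image2_of_mem ha hb)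

variable {d N : ℕ} {ρ : Fin N → ℝ} {r : ℝ}

@[simp]
theorem rWord_nil : rWord ρ [] = 1 := rfl

theorem rWord_append (v w : List (Fin N)) : rWord ρ (v ++ w) = rWord ρ v * rWord ρ w := by
  simp [rWord]

theorem rWord_cons (i : Fin N) (w : List (Fin N)) : rWord ρ (i :: w) = ρ i * rWord ρ w := by
  simp [rWord]

theorem rWord_pos (hρ0 : ∀ j, 0 < ρ j) (w : List (Fin N)) : 0 < rWord ρ w :=
  List.prod_pos fun _ ha => by
    obtain ⟨j, -, rfl⟩ := List.mem_map.1 ha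
    exact hρ0 j

theorem rWord_le_one (hρ0 : ∀ j, 0 < ρ j) (hρ1 : ∀ j, ρ j ≤ 1) (w : List (Fin N)) :
    rWord ρ w ≤ 1 := by
  induction w with
  | nil => rfl
  | cons i w ih =>
    rw [rWord_cons]
    exact mul_le_one₀ (hρ1 i) (rWord_pos hρ0 w).le ih

theorem rWord_le_of_isPrefix (hρ0 : ∀ j, 0 < ρ j) (hρ1 : ∀ j, ρ j ≤ 1) {p q : List (Fin N)}
    (h : p <+: q) : rWord ρ q ≤ rWord ρ p := by
  obtain ⟨t, rfl⟩ := h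
  rw [rWord_append]
  exact mul_le_of_le_one_right (rWord_pos hρ0 p).le (rWord_le_one hρ0 hρ1 t)

theorem rWord_eq_rWord_dropLast_mul {w : List (Fin N)} (hw : w ≠ []) :
    rWord ρ w = rWord ρ w.dropLast * ρ (w.getLast hw) := by
  conv_lhs => rw [← List.dropLast_append_getLast hw]
  rw [rWord_append, rWord_cons, rWord_nil, mul_one]

theorem mem_Jlevel_zero {x : List (Fin N)} : x ∈ Jlevel ρ r 0 ↔ x = [] := by
  simp [Jlevel]

theorem mem_Jlevel_of_ne_zero {n : ℕ} (hn : n ≠ 0) {x : List (Fin N)} :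
    x ∈ Jlevel ρ r n ↔ rWord ρ x ≤ r ^ n ∧ r ^ n < rWord ρ x.dropLast := by
  simp [Jlevel, hn]

theorem rWord_le_of_mem_Jlevel {n : ℕ} {x : List (Fin N)} (hx : x ∈ Jlevel ρ r n) :
    rWord ρ x ≤ r ^ n := by
  rcases eq_or_ne n 0 with rfl | hn
  · simp [mem_Jlevel_zero.1 hx]
  · exact ((mem_Jlevel_of_ne_zero hn).1 hx).1

theorem pow_succ_lt_rWord_of_mem_Jlevel (hr0 : 0 < r) (hr1 : r < 1) (hrρ : ∀ j, r ≤ ρ j)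
    {n : ℕ} {x : List (Fin N)} (hx : x ∈ Jlevel ρ r n) : r ^ (n + 1) < rWord ρ x := by
  rcases eq_or_ne n 0 with rfl | hn
  · simpa [mem_Jlevel_zero.1 hx] using hr1
  have hlt := ((mem_Jlevel_of_ne_zero hn).1 hx).2
  have hx0 : x ≠ [] := by
    rintro rfl
    exact hlt.not_ge (by simpa using rWord_le_of_mem_Jlevel hx)
  rw [rWord_eq_rWord_dropLast_mul hx0, pow_succ]
  exact mul_lt_mul hlt (hrρ _) hr0 ((pow_pos hr0 n).trans hlt).le

theorem disjoint_Jlevel_of_lt (hr0 : 0 < r) (hr1 : r < 1) (hrρ : ∀ j, r ≤ ρ j) {m n : ℕ}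
    (hmn : m < n) : Disjoint (Jlevel ρ r m) (Jlevel ρ r n) :=
  Set.disjoint_left.2 fun _ hm hn =>
    ((pow_le_pow_of_le_one hr0.le hr1.le hmn).trans_lt
      (pow_succ_lt_rWord_of_mem_Jlevel hr0 hr1 hrρ hm)).not_ge (rWord_le_of_mem_Jlevel hn)

theorem eq_of_isPrefix_of_mem_Jlevel (hρ1 : ∀ j, ρ j ≤ 1) (hr0 : 0 < r) (hr1 : r < 1)
    (hrρ : ∀ j, r ≤ ρ j) {m n : ℕ} {p q : List (Fin N)} (hmn : m ≤ n)
    (hp : p ∈ Jlevel ρ r m) (hq : q ∈ Jlevel ρ r n) (hqp : q <+: p) : q = p := by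
  rcases eq_or_ne m 0 with rfl | hm
  · rw [mem_Jlevel_zero.1 hp] at hqp ⊢
    exact List.prefix_nil.1 hqp
  by_contra hne
  have hp0 : p ≠ [] := by rintro rfl; exact hne (List.prefix_nil.1 hqp)
  have hq_dropLast : q <+: p.dropLast := by
    rw [← List.dropLast_append_getLast hp0, List.prefix_concat_iff] at hqp
    exact hqp.resolve_left fun h => hne (h.trans (List.dropLast_append_getLast hp0))
  have hρ0 : ∀ j, 0 < ρ j := fun j => hr0.trans_le (hrρ j)
  have := calc rWord ρ p.dropLast ≤ rWord ρ q := rWord_le_of_isPrefix hρ0 hρ1 hq_dropLast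
    _ ≤ r ^ n := rWord_le_of_mem_Jlevel hq
    _ ≤ r ^ m := pow_le_pow_of_le_one hr0.le hr1.le hmn
  exact ((mem_Jlevel_of_ne_zero hm).1 hp).2.not_ge this

theorem isPrefix_of_mem_Jlevel (hρ1 : ∀ j, ρ j ≤ 1) (hr0 : 0 < r) (hr1 : r < 1)
    (hrρ : ∀ j, r ≤ ρ j) {m n : ℕ} {p q y : List (Fin N)} (hmn : m ≤ n)
    (hp : p ∈ Jlevel ρ r m) (hq : q ∈ Jlevel ρ r n) (hpy : p <+: y) (hqy : q <+: y) :
    p <+: q := by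
  rcases List.prefix_or_prefix_of_prefix hpy hqy with hpq | hqp
  · exact hpq
  · rw [eq_of_isPrefix_of_mem_Jlevel hρ1 hr0 hr1 hrρ hmn hp hq hqp]

theorem exists_mem_Jlevel_isPrefix_of_rWord_le (hr0 : 0 ≤ r) (hr1 : r < 1) {m : ℕ} (hm : m ≠ 0)
    (y : List (Fin N)) (hy : rWord ρ y ≤ r ^ m) : ∃ p ∈ Jlevel ρ r m, p <+: y := by
  induction y using List.reverseRecOn with
  | nil => exact absurd hy (by simpa using pow_lt_one₀ hr0 hr1 hm)
  | append_singleton y j ih =>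
    by_cases hy' : rWord ρ y ≤ r ^ m
    · obtain ⟨p, hp, hpy⟩ := ih hy'
      exact ⟨p, hp, hpy.trans (List.prefix_append y [j])⟩
    · refine ⟨y ++ [j], (mem_Jlevel_of_ne_zero hm).2 ⟨hy, ?_⟩, List.prefix_refl _⟩
      rwa [List.dropLast_concat, ← not_le]

theorem exists_mem_Jlevel_isPrefix (hr0 : 0 ≤ r) (hr1 : r < 1) {m n : ℕ} (hmn : m ≤ n)
    {y : List (Fin N)} (hy : y ∈ Jlevel ρ r n) : ∃ p ∈ Jlevel ρ r m, p <+: y := by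
  rcases eq_or_ne m 0 with rfl | hm
  · exact ⟨[], mem_Jlevel_zero.2 rfl, List.nil_prefix⟩
  · exact exists_mem_Jlevel_isPrefix_of_rWord_le hr0 hr1 hm y
      ((rWord_le_of_mem_Jlevel hy).trans (pow_le_pow_of_le_one hr0 hr1.le hmn))

variable {S : Fin N → Euc d → Euc d} {κ : ℝ} {K : Set (Euc d)}

theorem sWord_append (v w : List (Fin N)) :
    sWord S (v ++ w) = sWord S v ∘ sWord S w := by
  induction v with
  | nil => rfl
  | cons i v ih => exact congrArg (S i ∘ ·) ih

theorem sWord_image_subset (hK : ∀ j, S j '' K ⊆ K) (w : List (Fin N)) :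
    sWord S w '' K ⊆ K := by
  induction w with
  | nil => simp [sWord]
  | cons i w ih =>
    rw [show sWord S (i :: w) = S i ∘ sWord S w from rfl, Set.image_comp]
    exact (Set.image_mono ih).trans (hK i)

theorem sWord_image_subset_of_isPrefix (hK : ∀ j, S j '' K ⊆ K) {p q : List (Fin N)}
    (h : p <+: q) : sWord S q '' K ⊆ sWord S p '' K := by
  obtain ⟨t, rfl⟩ := h
  rw [sWord_append, Set.image_comp]
  exact Set.image_mono (sWord_image_subset hK t)

def descendants (ρ : Fin N → ℝ) (r : ℝ) (p : List (Fin N)) (n : ℕ) : Set (List (Fin N)) :=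
  {y | y ∈ Jlevel ρ r n ∧ p <+: y}

theorem descendants_subset_singleton (hρ1 : ∀ j, ρ j ≤ 1) (hr0 : 0 < r) (hr1 : r < 1)
    (hrρ : ∀ j, r ≤ ρ j) {n : ℕ} {p : List (Fin N)} (hp : p ∈ Jlevel ρ r n) :
    descendants ρ r p n ⊆ {p} := fun _ ⟨hy, hpy⟩ =>
  (eq_of_isPrefix_of_mem_Jlevel hρ1 hr0 hr1 hrρ le_rfl hy hp hpy).symm

theorem descendants_subset_biUnion (hρ1 : ∀ j, ρ j ≤ 1) (hr0 : 0 < r) (hr1 : r < 1)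
    (hrρ : ∀ j, r ≤ ρ j) {k m n : ℕ} {p : List (Fin N)} (hkm : k ≤ m) (hmn : m ≤ n)
    (hp : p ∈ Jlevel ρ r k) :
    descendants ρ r p n ⊆ ⋃ c ∈ descendants ρ r p m, descendants ρ r c n := by
  rintro y ⟨hy, hpy⟩
  obtain ⟨c, hc, hcy⟩ := exists_mem_Jlevel_isPrefix hr0.le hr1 hmn hy
  exact Set.mem_biUnion ⟨hc, isPrefix_of_mem_Jlevel hρ1 hr0 hr1 hrρ hkm hp hc hpy hcy⟩ ⟨hy, hcy⟩

theorem descendants_succ_subset_neighborSet (hr0 : 0 < r) (hr1 : r < 1) (hrρ : ∀ j, r ≤ ρ j)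
    {n : ℕ} {p : List (Fin N)} (hp : p ∈ Jlevel ρ r n) :
    descendants ρ r p (n + 1) ⊆ (augIFS S ρ r κ K).neighborSet p := fun _ ⟨hc, hpc⟩ =>
  ⟨Or.inl ⟨n, hp, hc, hpc⟩,
    (disjoint_Jlevel_of_lt hr0 hr1 hrρ n.lt_succ_self).ne_of_mem hp hc⟩

theorem encard_descendants_le {M : ℕ∞} (hρ1 : ∀ j, ρ j ≤ 1) (hr0 : 0 < r) (hr1 : r < 1)
    (hrρ : ∀ j, r ≤ ρ j) (hM : ∀ v, ((augIFS S ρ r κ K).neighborSet v).encard ≤ M) (j : ℕ)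
    {n : ℕ} {p : List (Fin N)} (hp : p ∈ Jlevel ρ r n) :
    (descendants ρ r p (n + j)).encard ≤ M ^ j := by
  induction j generalizing n p with
  | zero =>
    simpa using Set.encard_le_encard (descendants_subset_singleton hρ1 hr0 hr1 hrρ hp)
  | succ j ih =>
    have hchildren : (descendants ρ r p (n + 1)).encard ≤ M :=
      (Set.encard_le_encard
        (descendants_succ_subset_neighborSet hr0 hr1 hrρ hp)).trans (hM p)
    calc (descendants ρ r p (n + (j + 1))).encard
        ≤ (⋃ c ∈ descendants ρ r p (n + 1), descendants ρ r c (n + 1 + j)).encard := by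
          rw [← add_assoc, add_right_comm]
          exact Set.encard_le_encard
            (descendants_subset_biUnion hρ1 hr0 hr1 hrρ (by omega) (by omega) hp)
      _ ≤ (descendants ρ r p (n + 1)).encard * M ^ j :=
          Set.encard_biUnion_le_encard_mul fun _ hc => ih hc.1
      _ ≤ M ^ (j + 1) := by
          rw [pow_succ']
          gcongr

def cellsMeetingBall (S : Fin N → Euc d → Euc d) (ρ : Fin N → ℝ) (r : ℝ) (K : Set (Euc d))
    (n : ℕ) (z : Euc d) (R : ℝ) : Set (List (Fin N)) :=
  {x | x ∈ Jlevel ρ r n ∧ ((sWord S x '' K) ∩ closedBall z R).Nonempty}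

theorem augIFS_adj_of_dist_le {n : ℕ} {x y : List (Fin N)} {u v : Euc d}
    (hx : x ∈ Jlevel ρ r n) (hy : y ∈ Jlevel ρ r n) (hxy : x ≠ y) (hu : u ∈ sWord S x '' K)
    (hv : v ∈ sWord S y '' K) (huv : dist u v ≤ κ * r ^ n) : (augIFS S ρ r κ K).Adj x y :=
  ⟨Or.inr (Or.inr (Or.inl ⟨n, hx, hy, hxy, (setDist_le_dist hu hv).trans huv⟩)), hxy⟩

theorem isClique_cellsMeetingBall {n : ℕ} {z : Euc d} {R : ℝ} (hR : 2 * R ≤ κ * r ^ n) :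
    (augIFS S ρ r κ K).IsClique (cellsMeetingBall S ρ r K n z R) := by
  rintro x ⟨hx, u, hux, huz⟩ y ⟨hy, v, hvy, hvz⟩ hxy
  refine augIFS_adj_of_dist_le hx hy hxy hux hvy ?_
  calc dist u v ≤ dist u z + dist v z := dist_triangle_right u v z
    _ ≤ R + R := add_le_add (mem_closedBall.1 huz) (mem_closedBall.1 hvz)
    _ ≤ κ * r ^ n := by linarith

theorem encard_cellsMeetingBall_zero_le (z : Euc d) (R : ℝ) :
    (cellsMeetingBall S ρ r K 0 z R).encard ≤ 1 :=
  Set.encard_le_one_iff.2 fun _ _ ha hb =>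
    (mem_Jlevel_zero.1 ha.1).trans (mem_Jlevel_zero.1 hb.1).symm

theorem cellsMeetingBall_subset_biUnion (hK : ∀ j, S j '' K ⊆ K) (hr0 : 0 ≤ r) (hr1 : r < 1)
    {k n : ℕ} (hkn : k ≤ n) (z : Euc d) (R : ℝ) :
    cellsMeetingBall S ρ r K n z R ⊆
      ⋃ p ∈ cellsMeetingBall S ρ r K k z R, descendants ρ r p n := by
  rintro x ⟨hx, hxz⟩
  obtain ⟨p, hp, hpx⟩ := exists_mem_Jlevel_isPrefix hr0 hr1 hkn hx
  exact Set.mem_biUnion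
    ⟨hp, hxz.mono (Set.inter_subset_inter_left _ (sWord_image_subset_of_isPrefix hK hpx))⟩
    ⟨hx, hpx⟩

theorem encard_cellsMeetingBall_add_le {M a : ℕ∞} (hK : ∀ j, S j '' K ⊆ K)
    (hρ1 : ∀ j, ρ j ≤ 1) (hr0 : 0 < r) (hr1 : r < 1) (hrρ : ∀ j, r ≤ ρ j)
    (hM : ∀ v, ((augIFS S ρ r κ K).neighborSet v).encard ≤ M) {k : ℕ} (j : ℕ) {z : Euc d}
    {R : ℝ} (ha : (cellsMeetingBall S ρ r K k z R).encard ≤ a) :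
    (cellsMeetingBall S ρ r K (k + j) z R).encard ≤ a * M ^ j :=
  calc (cellsMeetingBall S ρ r K (k + j) z R).encard
      ≤ (⋃ p ∈ cellsMeetingBall S ρ r K k z R, descendants ρ r p (k + j)).encard :=
        Set.encard_le_encard (cellsMeetingBall_subset_biUnion hK hr0.le hr1 (by omega) z R)
    _ ≤ (cellsMeetingBall S ρ r K k z R).encard * M ^ j :=
        Set.encard_biUnion_le_encard_mul fun _ hp =>
          encard_descendants_le hρ1 hr0 hr1 hrρ hM j hp.1
    _ ≤ a * M ^ j := by gcongr

theorem bounded_degree_implies_finite_overlap_general {d N : ℕ}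
    (S : Fin N → Euc d → Euc d) (ρ : Fin N → ℝ) (r κ : ℝ) (K : Set (Euc d))
    (hρ0 : ∀ j, 0 < ρ j) (hρ1 : ∀ j, ρ j < 1)
    (hr : IsLeast (Set.range ρ) r) (hκ : 0 < κ)
    (hKinv : K = ⋃ j, S j '' K)
    (hbd : BddDeg (augIFS S ρ r κ K)) :
    ∀ c : ℝ, 0 < c → ∃ ℓ : ℕ, 0 < ℓ ∧ ∀ (n : ℕ) (z : Euc d),
      {x : List (Fin N) | x ∈ Jlevel ρ r n ∧
        ((sWord S x '' K) ∩ Metric.closedBall z (c * r ^ n)).Nonempty}.Finite ∧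
      {x : List (Fin N) | x ∈ Jlevel ρ r n ∧
        ((sWord S x '' K) ∩ Metric.closedBall z (c * r ^ n)).Nonempty}.ncard ≤ ℓ := by
  intro c hc
  obtain ⟨M, hM⟩ := bddDeg_iff.1 hbd
  obtain ⟨j₀, hj₀⟩ := hr.1
  have hr0 : 0 < r := hj₀ ▸ hρ0 j₀
  have hr1 : r < 1 := hj₀ ▸ hρ1 j₀
  have hrρ : ∀ j, r ≤ ρ j := fun j => hr.2 ⟨j, rfl⟩
  have hK : ∀ j, S j '' K ⊆ K := fun j => (Set.subset_iUnion (fun j => S j '' K) j).trans hKinv.ge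
  obtain ⟨m, hm⟩ := exists_pow_lt_of_lt_one (div_pos hκ (by positivity : 0 < 2 * c)) hr1
  rw [lt_div_iff₀ (by positivity)] at hm
  refine ⟨(M + 1) ^ (m + 1), by positivity, fun n z => Set.encard_le_coe_iff_finite_ncard_le.1 ?_⟩
  have hancestors : (cellsMeetingBall S ρ r K (n - m) z (c * r ^ n)).encard ≤ M + 1 := by
    rcases le_or_gt m n with hmn | hnm
    · refine (isClique_cellsMeetingBall ?_).encard_le_succ hM
      calc 2 * (c * r ^ n) = r ^ m * (2 * c) * r ^ (n - m) := by
            rw [← Nat.add_sub_cancel' hmn, pow_add, Nat.add_sub_cancel_left]; ring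
        _ ≤ κ * r ^ (n - m) := by gcongr
    · rw [Nat.sub_eq_zero_of_le hnm.le]
      exact (encard_cellsMeetingBall_zero_le z _).trans le_add_self
  have hcount := encard_cellsMeetingBall_add_le hK (fun j => (hρ1 j).le) hr0 hr1 hrρ hM
    (n - (n - m)) hancestors
  rw [Nat.add_sub_cancel' (Nat.sub_le n m)] at hcount
  calc _ ≤ (M + 1 : ℕ∞) * M ^ (n - (n - m)) := hcount
    _ ≤ (M + 1) * (M + 1) ^ m := by
      gcongr
      · exact le_add_self
      · exact le_self_add
      · omega
    _ = ((M + 1) ^ (m + 1) : ℕ) := by push_cast; ring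

/-- If the augmented tree of an IFS of contractive similitudes is of bounded
degree, then for every `c > 0` there is `ℓ > 0` such that any ball of radius
`c rⁿ` meets at most `ℓ` of the cells `K_x`, `x ∈ 𝓙_n`. -/
theorem bounded_degree_implies_finite_overlap {d N : ℕ} (hN : 2 ≤ N)
    (S : Fin N → Euc d → Euc d) (ρ : Fin N → ℝ) (r κ : ℝ) (K : Set (Euc d))
    (hρ0 : ∀ j, 0 < ρ j) (hρ1 : ∀ j, ρ j < 1)
    (hsim : ∀ j a b, dist (S j a) (S j b) = ρ j * dist a b)
    (hr : IsLeast (Set.range ρ) r) (hκ : 0 < κ)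
    (hKc : IsCompact K) (hKne : K.Nonempty) (hKinv : K = ⋃ j, S j '' K)
    (hbd : BddDeg (augIFS S ρ r κ K)) :
    ∀ c : ℝ, 0 < c → ∃ ℓ : ℕ, 0 < ℓ ∧ ∀ (n : ℕ) (z : Euc d),
      {x : List (Fin N) | x ∈ Jlevel ρ r n ∧
        ((sWord S x '' K) ∩ Metric.closedBall z (c * r ^ n)).Nonempty}.Finite ∧
      {x : List (Fin N) | x ∈ Jlevel ρ r n ∧
        ((sWord S x '' K) ∩ Metric.closedBall z (c * r ^ n)).Nonempty}.ncard ≤ ℓ :=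
  bounded_degree_implies_finite_overlap_general S ρ r κ K hρ0 hρ1 hr hκ hKinv hbd

end HypIFS
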